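/- arXiv:2603.21194 — 3 statements merged into one kernel-verified Lean document; each statement's English description precedes it below -/
import Mathlib

section
/- Consider the adversarial influence modification applied with magnitude p ∈ [0, 1/|A_i|] to the incoming weights of each targeted agent. The aggregate adversarial outcome g(p) = 1_Uᵀ z_U*(p) + |A| is a nondecreasing function of p, provided the intrinsic opinions satisfy s_U ∈ [0,1]^{|U|}. -/
private lemma aux_nonneg {ι : Type*} [Fintype ι] (K : Matrix ι ι ℝ) (x y : ι → ℝ)
    (hK : ∀ i j, 0 ≤ K i j) (hrow : ∀ i, ∑ j, K i j < 1)
    (heq : ∀ i, x i = y i + ∑ j, K i j * x j) (hy : ∀ i, 0 ≤ y i) :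
    ∀ i, 0 ≤ x i := by
  by_contra h
  push_neg at h
  obtain ⟨i0, hi0⟩ := h
  obtain ⟨i, -, hmin⟩ := Finset.exists_min_image Finset.univ x ⟨i0, Finset.mem_univ i0⟩
  have hxi : x i < 0 := lt_of_le_of_lt (hmin i0 (Finset.mem_univ i0)) hi0
  have h1 : (∑ j, K i j) * x i ≤ ∑ j, K i j * x j := by
    rw [Finset.sum_mul]
    exact Finset.sum_le_sum fun j _ =>
      mul_le_mul_of_nonneg_left (hmin j (Finset.mem_univ j)) (hK i j)
  have h2 : x i < (∑ j, K i j) * x i := by nlinarith [hrow i]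
  nlinarith [heq i, hy i]

private lemma aux_le_one {ι : Type*} [Fintype ι] (K : Matrix ι ι ℝ) (x y : ι → ℝ)
    (hK : ∀ i j, 0 ≤ K i j) (hrow : ∀ i, ∑ j, K i j < 1)
    (heq : ∀ i, x i = y i + ∑ j, K i j * x j) (hy : ∀ i, y i + ∑ j, K i j ≤ 1) :
    ∀ i, x i ≤ 1 := by
  by_contra h
  push_neg at h
  obtain ⟨i0, hi0⟩ := h
  obtain ⟨i, -, hmax⟩ := Finset.exists_max_image Finset.univ x ⟨i0, Finset.mem_univ i0⟩
  have hxi : 1 < x i := lt_of_lt_of_le hi0 (hmax i0 (Finset.mem_univ i0))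
  have h1 : ∑ j, K i j * x j ≤ (∑ j, K i j) * x i := by
    rw [Finset.sum_mul]
    exact Finset.sum_le_sum fun j _ =>
      mul_le_mul_of_nonneg_left (hmax j (Finset.mem_univ j)) (hK i j)
  nlinarith [heq i, hy i, hrow i, mul_pos (sub_pos.2 (hrow i)) (sub_pos.2 hxi)]

/-- With the adversarial influence modification of magnitude
p ∈ [0, 1/|A_i|] applied to the incoming weights of each targeted agent
(w'_{ij} = (1−|A_i|p)w_{ij} + p·1[j ∈ A_i]), adversarial agents fixed at opinion 1
and normal agents following FJ updates with θᵢ ∈ (0,1] and s_U ∈ [0,1]^{|U|},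
the aggregate adversarial outcome g(p) = 1_Uᵀ z_U*(p) + |A| is nondecreasing in p. -/
theorem stmt9 (N : ℕ) (W : Matrix (Fin N) (Fin N) ℝ) (θ s : Fin N → ℝ)
    (A : Finset (Fin N)) (B : Fin N → Finset (Fin N))
    (hW0 : ∀ i j, 0 ≤ W i j) (hW1 : ∀ i, ∑ j, W i j = 1)
    (hB : ∀ i, B i ⊆ A)
    (hθ : ∀ i ∉ A, θ i ∈ Set.Ioc (0 : ℝ) 1)
    (hs : ∀ i ∉ A, s i ∈ Set.Icc (0 : ℝ) 1) :
    let Wmod : ℝ → Matrix (Fin N) (Fin N) ℝ := fun p =>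
      Matrix.of fun i j =>
        (1 - ((B i).card : ℝ) * p) * W i j + (if j ∈ B i then p else 0)
    let ΘU : Matrix {i : Fin N // i ∉ A} {i : Fin N // i ∉ A} ℝ :=
      Matrix.diagonal fun i => θ i.1
    let WUU : ℝ → Matrix {i : Fin N // i ∉ A} {i : Fin N // i ∉ A} ℝ := fun p =>
      Matrix.of fun i j => Wmod p i.1 j.1
    let WUA : ℝ → Matrix {i : Fin N // i ∉ A} {i : Fin N // i ∈ A} ℝ := fun p =>
      Matrix.of fun i j => Wmod p i.1 j.1
    let g : ℝ → ℝ := fun p =>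
      (∑ i, (1 - (1 - ΘU) * WUU p)⁻¹.mulVec
        (ΘU.mulVec (fun i => s i.1) + ((1 - ΘU) * WUA p).mulVec fun _ => 1) i) +
      (A.card : ℝ)
    ∀ p₁ p₂ : ℝ, 0 ≤ p₁ → p₁ ≤ p₂ → (∀ i, ((B i).card : ℝ) * p₂ ≤ 1) →
      g p₁ ≤ g p₂ := by
  intro Wmod ΘU WUU WUA g p₁ p₂ hp1 hp12 hcap
  classical
  have hp2 : 0 ≤ p₂ := le_trans hp1 hp12
  have hcap1 : ∀ i, ((B i).card : ℝ) * p₁ ≤ 1 := fun i =>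
    le_trans (mul_le_mul_of_nonneg_left hp12 (Nat.cast_nonneg _)) (hcap i)
  -- unfolding lemmas for the lets
  have hWmodE : ∀ p i j, Wmod p i j
      = (1 - ((B i).card : ℝ) * p) * W i j + (if j ∈ B i then p else 0) := fun _ _ _ => rfl
  have hΘE : ΘU = Matrix.diagonal (fun i : {i : Fin N // i ∉ A} => θ i.1) := rfl
  -- abbreviations
  set K : ℝ → Matrix {i : Fin N // i ∉ A} {i : Fin N // i ∉ A} ℝ :=
    fun p => (1 - ΘU) * WUU p with hKdef
  set b : ℝ → {i : Fin N // i ∉ A} → ℝ :=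
    fun p => ΘU.mulVec (fun i => s i.1) + ((1 - ΘU) * WUA p).mulVec (fun _ => 1) with hbdef
  set z : ℝ → {i : Fin N // i ∉ A} → ℝ :=
    fun p => (1 - K p)⁻¹.mulVec (b p) with hzdef
  have hg : ∀ p, g p = (∑ i, z p i) + (A.card : ℝ) := fun p => rfl
  -- diagonal identity
  have hone : (1 : Matrix {i : Fin N // i ∉ A} {i : Fin N // i ∉ A} ℝ) - ΘU
      = Matrix.diagonal (fun i : {i : Fin N // i ∉ A} => 1 - θ i.1) := by
    rw [hΘE, ← Matrix.diagonal_one, Matrix.diagonal_sub]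
  -- entry lemmas
  have hKe : ∀ p (i j : {i : Fin N // i ∉ A}), K p i j = (1 - θ i.1) * Wmod p i.1 j.1 := by
    intro p i j
    show ((1 - ΘU) * WUU p) i j = _
    rw [hone, Matrix.diagonal_mul]
    rfl
  have hbe : ∀ p (i : {i : Fin N // i ∉ A}), b p i
      = θ i.1 * s i.1 + ∑ j : {j : Fin N // j ∈ A}, (1 - θ i.1) * Wmod p i.1 j.1 := by
    intro p i
    show (ΘU.mulVec (fun i => s i.1)) i + (((1 - ΘU) * WUA p).mulVec (fun _ => 1)) i = _
    congr 1
    · rw [hΘE]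
      simp [Matrix.mulVec, dotProduct, Matrix.diagonal_apply, ite_mul]
    · rw [hone]
      simp only [Matrix.mulVec, dotProduct, Matrix.diagonal_mul, mul_one]
      rfl
  -- basic positivity for Wmod
  have hWm0 : ∀ p, 0 ≤ p → (∀ i, ((B i).card : ℝ) * p ≤ 1) → ∀ i j, 0 ≤ Wmod p i j := by
    intro p hp hc i j
    rw [hWmodE]
    refine add_nonneg (mul_nonneg (by linarith [hc i]) (hW0 i j)) ?_
    split_ifs
    exacts [hp, le_rfl]
  have hWm1 : ∀ p i, ∑ j, Wmod p i j = 1 := by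
    intro p i
    simp only [hWmodE]
    rw [Finset.sum_add_distrib, ← Finset.mul_sum, hW1]
    have : ∑ j, (if j ∈ B i then p else 0) = ((B i).card : ℝ) * p := by
      rw [Finset.sum_ite_mem, Finset.univ_inter, Finset.sum_const, nsmul_eq_mul]
    rw [this]; ring
  -- splitting over A / not A
  have hsplit : ∀ f : Fin N → ℝ,
      (∑ j : {j : Fin N // j ∈ A}, f j.1) + (∑ j : {j : Fin N // j ∉ A}, f j.1) = ∑ j, f j :=
    by
      intro f
      rw [← Finset.sum_subtype A (fun x => Iff.rfl) f,
        ← Finset.sum_subtype Aᶜ (fun x => Finset.mem_compl) f,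
        Finset.sum_add_sum_compl]
  -- row-sum facts
  have hSA0 : ∀ p, 0 ≤ p → (∀ i, ((B i).card : ℝ) * p ≤ 1) → ∀ i : Fin N,
      0 ≤ ∑ j : {j : Fin N // j ∈ A}, Wmod p i j.1 :=
    fun p hp hc i => Finset.sum_nonneg fun j _ => hWm0 p hp hc i j.1
  have hSU0 : ∀ p, 0 ≤ p → (∀ i, ((B i).card : ℝ) * p ≤ 1) → ∀ i : Fin N,
      0 ≤ ∑ j : {j : Fin N // j ∉ A}, Wmod p i j.1 :=
    fun p hp hc i => Finset.sum_nonneg fun j _ => hWm0 p hp hc i j.1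
  have hSsum : ∀ p (i : Fin N),
      (∑ j : {j : Fin N // j ∈ A}, Wmod p i j.1) + (∑ j : {j : Fin N // j ∉ A}, Wmod p i j.1) = 1 :=
    fun p i => (hsplit (fun j => Wmod p i j)).trans (hWm1 p i)
  -- K facts
  have hK0 : ∀ p, 0 ≤ p → (∀ i, ((B i).card : ℝ) * p ≤ 1) → ∀ i j, 0 ≤ K p i j := by
    intro p hp hc i j
    rw [hKe]
    exact mul_nonneg (by linarith [(hθ i.1 i.2).2]) (hWm0 p hp hc i.1 j.1)
  have hKrowe : ∀ p (i : {i : Fin N // i ∉ A}),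
      ∑ j, K p i j = (1 - θ i.1) * ∑ j : {j : Fin N // j ∉ A}, Wmod p i.1 j.1 := by
    intro p i
    rw [Finset.mul_sum]
    exact Finset.sum_congr rfl fun j _ => hKe p i j
  have hKrow : ∀ p, 0 ≤ p → (∀ i, ((B i).card : ℝ) * p ≤ 1) →
      ∀ i : {i : Fin N // i ∉ A}, ∑ j, K p i j < 1 := by
    intro p hp hc i
    rw [hKrowe]
    have h1 := hSA0 p hp hc i.1
    have h2 := hSU0 p hp hc i.1
    have h3 := hSsum p i.1
    have hθi := hθ i.1 i.2
    nlinarith [hθi.1, hθi.2]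
  -- b facts
  have hb0 : ∀ p, 0 ≤ p → (∀ i, ((B i).card : ℝ) * p ≤ 1) →
      ∀ i : {i : Fin N // i ∉ A}, 0 ≤ b p i := by
    intro p hp hc i
    rw [hbe]
    have hθi := hθ i.1 i.2
    have hsi := hs i.1 i.2
    have := hSA0 p hp hc i.1
    have : 0 ≤ ∑ j : {j : Fin N // j ∈ A}, (1 - θ i.1) * Wmod p i.1 j.1 :=
      Finset.sum_nonneg fun j _ => mul_nonneg (by linarith [hθi.2]) (hWm0 p hp hc i.1 j.1)
    nlinarith [hθi.1, hsi.1]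
  have hb1 : ∀ p, 0 ≤ p → (∀ i, ((B i).card : ℝ) * p ≤ 1) →
      ∀ i : {i : Fin N // i ∉ A}, b p i + ∑ j, K p i j ≤ 1 := by
    intro p hp hc i
    rw [hbe, hKrowe]
    have hθi := hθ i.1 i.2
    have hsi := hs i.1 i.2
    have h3 := hSsum p i.1
    have hSA : ∑ j : {j : Fin N // j ∈ A}, (1 - θ i.1) * Wmod p i.1 j.1
        = (1 - θ i.1) * ∑ j : {j : Fin N // j ∈ A}, Wmod p i.1 j.1 := by
      rw [Finset.mul_sum]
    rw [hSA]
    nlinarith [hθi.1, hθi.2, hsi.2]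
  -- invertibility
  have hdet : ∀ p, 0 ≤ p → (∀ i, ((B i).card : ℝ) * p ≤ 1) → (1 - K p).det ≠ 0 := by
    intro p hp hc
    apply det_ne_zero_of_sum_row_lt_diag
    intro k
    have hK0' := hK0 p hp hc
    have hrow := hKrow p hp hc k
    have hKkk : K p k k ≤ ∑ j, K p k j :=
      Finset.single_le_sum (fun j _ => hK0' k j) (Finset.mem_univ k)
    have h2 : ∑ j ∈ Finset.univ.erase k, ‖(1 - K p) k j‖
        = ∑ j ∈ Finset.univ.erase k, K p k j := by
      refine Finset.sum_congr rfl fun j hj => ?_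
      have hjk : k ≠ j := (Finset.ne_of_mem_erase hj).symm
      rw [Matrix.sub_apply, Matrix.one_apply_ne hjk, zero_sub, norm_neg, Real.norm_eq_abs,
        abs_of_nonneg (hK0' k j)]
    have h3 : ∑ j ∈ Finset.univ.erase k, K p k j + K p k k = ∑ j, K p k j :=
      Finset.sum_erase_add _ _ (Finset.mem_univ k)
    have h4 : ‖(1 - K p) k k‖ = 1 - K p k k := by
      rw [Matrix.sub_apply, Matrix.one_apply_eq, Real.norm_eq_abs, abs_of_nonneg (by linarith)]
    rw [h2, h4]
    linarith
  -- fixed point equation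
  have heqz : ∀ p, 0 ≤ p → (∀ i, ((B i).card : ℝ) * p ≤ 1) →
      ∀ i, z p i = b p i + ∑ j, K p i j * z p j := by
    intro p hp hc i
    have hinv := Matrix.mul_nonsing_inv (1 - K p) (isUnit_iff_ne_zero.mpr (hdet p hp hc))
    have h2 : (1 - K p).mulVec (z p) = b p := by
      show (1 - K p).mulVec ((1 - K p)⁻¹.mulVec (b p)) = b p
      rw [Matrix.mulVec_mulVec, hinv, Matrix.one_mulVec]
    have h3 := congrFun h2 i
    rw [Matrix.sub_mulVec, Matrix.one_mulVec] at h3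
    simp only [Pi.sub_apply] at h3
    have h4 : ((K p).mulVec (z p)) i = ∑ j, K p i j * z p j := rfl
    rw [h4] at h3
    linarith
  -- bounds on z
  have hz0 : ∀ p, 0 ≤ p → (∀ i, ((B i).card : ℝ) * p ≤ 1) → ∀ i, 0 ≤ z p i :=
    fun p hp hc => aux_nonneg (K p) (z p) (b p) (hK0 p hp hc) (hKrow p hp hc)
      (heqz p hp hc) (hb0 p hp hc)
  have hz1 : ∀ p, 0 ≤ p → (∀ i, ((B i).card : ℝ) * p ≤ 1) → ∀ i, z p i ≤ 1 :=
    fun p hp hc => aux_le_one (K p) (z p) (b p) (hK0 p hp hc) (hKrow p hp hc)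
      (heqz p hp hc) (hb1 p hp hc)
  -- difference of Wmod
  have hΔ : ∀ i j, Wmod p₂ i j - Wmod p₁ i j
      = (p₂ - p₁) * ((if j ∈ B i then (1:ℝ) else 0) - ((B i).card : ℝ) * W i j) := by
    intro i j
    rw [hWmodE, hWmodE]
    split_ifs <;> ring
  -- nonnegativity of the forcing term c
  have hc0 : ∀ i : {i : Fin N // i ∉ A},
      0 ≤ (b p₂ i - b p₁ i) + ∑ j, (K p₂ i j - K p₁ i j) * z p₁ j := by
    intro i
    have hθi := hθ i.1 i.2
    have hz1' := hz1 p₁ hp1 hcap1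
    have hbdiff : b p₂ i - b p₁ i
        = (1 - θ i.1) * ∑ j : {j : Fin N // j ∈ A}, (Wmod p₂ i.1 j.1 - Wmod p₁ i.1 j.1) := by
      rw [hbe p₂ i, hbe p₁ i, Finset.mul_sum]
      rw [show ∀ x u v : ℝ, (x + u) - (x + v) = u - v from fun _ _ _ => by ring]
      rw [← Finset.sum_sub_distrib]
      exact Finset.sum_congr rfl fun j _ => by ring
    have hKdiff : ∑ j, (K p₂ i j - K p₁ i j) * z p₁ j
        = (1 - θ i.1) * ∑ j : {j : Fin N // j ∉ A},
            (Wmod p₂ i.1 j.1 - Wmod p₁ i.1 j.1) * z p₁ j := by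
      rw [Finset.mul_sum]
      refine Finset.sum_congr rfl fun j _ => ?_
      rw [hKe, hKe]; ring
    rw [hbdiff, hKdiff, ← mul_add]
    apply mul_nonneg (by linarith [hθi.2])
    -- the bracket
    have hind : ∑ j : {j : Fin N // j ∈ A}, (if j.1 ∈ B i.1 then (1:ℝ) else 0)
        = ((B i.1).card : ℝ) := by
      rw [← Finset.sum_subtype A (fun x => Iff.rfl) (fun j => if j ∈ B i.1 then (1:ℝ) else 0)]
      rw [Finset.sum_ite_mem, Finset.inter_eq_right.mpr (hB i.1), Finset.sum_const,
        nsmul_eq_mul, mul_one]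
    have hS1 : ∑ j : {j : Fin N // j ∈ A}, (Wmod p₂ i.1 j.1 - Wmod p₁ i.1 j.1)
        = (p₂ - p₁) * (((B i.1).card : ℝ)
            - ((B i.1).card : ℝ) * ∑ j : {j : Fin N // j ∈ A}, W i.1 j.1) := by
      rw [Finset.sum_congr rfl fun j _ => hΔ i.1 j.1, ← Finset.mul_sum,
        Finset.sum_sub_distrib, ← Finset.mul_sum, hind]
    have hS2 : ∑ j : {j : Fin N // j ∉ A}, (Wmod p₂ i.1 j.1 - Wmod p₁ i.1 j.1) * z p₁ j
        = (p₂ - p₁) * (-(((B i.1).card : ℝ)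
            * ∑ j : {j : Fin N // j ∉ A}, W i.1 j.1 * z p₁ j)) := by
      have e : ∀ j : {j : Fin N // j ∉ A},
          (Wmod p₂ i.1 j.1 - Wmod p₁ i.1 j.1) * z p₁ j
          = (p₂ - p₁) * (-(((B i.1).card : ℝ) * (W i.1 j.1 * z p₁ j))) := by
        intro j
        have hjB : j.1 ∉ B i.1 := fun hmem => j.2 (hB i.1 hmem)
        rw [hΔ i.1 j.1, if_neg hjB]; ring
      rw [Finset.sum_congr rfl fun j _ => e j, ← Finset.mul_sum]
      congr 1
      rw [Finset.sum_neg_distrib, ← Finset.mul_sum]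
    have hsplitW : (∑ j : {j : Fin N // j ∈ A}, W i.1 j.1)
        + (∑ j : {j : Fin N // j ∉ A}, W i.1 j.1) = 1 :=
      (hsplit (fun j => W i.1 j)).trans (hW1 i.1)
    have hWz : ∑ j : {j : Fin N // j ∉ A}, W i.1 j.1 * z p₁ j
        ≤ ∑ j : {j : Fin N // j ∉ A}, W i.1 j.1 :=
      Finset.sum_le_sum fun j _ => mul_le_of_le_one_right (hW0 i.1 j.1) (hz1' j)
    rw [hS1, hS2]
    have hq : (0:ℝ) ≤ p₂ - p₁ := by linarith
    have hcB : (0:ℝ) ≤ ((B i.1).card : ℝ) := Nat.cast_nonneg _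
    have hbr : (0:ℝ) ≤ 1 - (∑ j : {j : Fin N // j ∈ A}, W i.1 j.1)
        - ∑ j : {j : Fin N // j ∉ A}, W i.1 j.1 * z p₁ j := by linarith
    nlinarith [mul_nonneg (mul_nonneg hq hcB) hbr]
  -- difference fixed point equation
  have heqd : ∀ i, z p₂ i - z p₁ i
      = ((b p₂ i - b p₁ i) + ∑ j, (K p₂ i j - K p₁ i j) * z p₁ j)
        + ∑ j, K p₂ i j * (z p₂ j - z p₁ j) := by
    intro i
    have h1 := heqz p₁ hp1 hcap1 i
    have h2 := heqz p₂ hp2 hcap i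
    have e1 : ∑ j, (K p₂ i j - K p₁ i j) * z p₁ j
        = (∑ j, K p₂ i j * z p₁ j) - ∑ j, K p₁ i j * z p₁ j := by
      rw [← Finset.sum_sub_distrib]
      exact Finset.sum_congr rfl fun j _ => sub_mul _ _ _
    have e2 : ∑ j, K p₂ i j * (z p₂ j - z p₁ j)
        = (∑ j, K p₂ i j * z p₂ j) - ∑ j, K p₂ i j * z p₁ j := by
      rw [← Finset.sum_sub_distrib]
      exact Finset.sum_congr rfl fun j _ => mul_sub _ _ _
    rw [e1, e2]
    linarith
  have hd : ∀ i, 0 ≤ z p₂ i - z p₁ i :=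
    aux_nonneg (K p₂) (fun i => z p₂ i - z p₁ i)
      (fun i => (b p₂ i - b p₁ i) + ∑ j, (K p₂ i j - K p₁ i j) * z p₁ j)
      (hK0 p₂ hp2 hcap) (hKrow p₂ hp2 hcap) heqd hc0
  rw [hg p₁, hg p₂]
  have : ∑ i, z p₁ i ≤ ∑ i, z p₂ i :=
    Finset.sum_le_sum fun i _ => by linarith [hd i]
  linarith
end

section
/- In the adversarial FJ model with broadcasters fixed at value 1, the aggregate outcome satisfies g_{A,{T_j}}(z) ≥ g_∅ whenever s_U and the original fixed point lie in [0,1], where g_∅ = 1ᵀz* is the aggregate opinion of the unattacked FJ system restricted so that agents in A use s_j = 1 and θ_j = 1; i.e., making adversarial agents fully stubborn at opinion 1 and adding nonnegative influence increments cannot decrease the aggregate opinion toward the adversarial stance. -/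
lemma helper_nonneg {n : Type*} [Fintype n] [DecidableEq n]
    (K : Matrix n n ℝ) (hK : ∀ i j, 0 ≤ K i j)
    (hr : ∀ i, ∑ j, K i j < 1)
    (w : n → ℝ) (hw : ∀ i, 0 ≤ ((1 : Matrix n n ℝ) - K).mulVec w i) :
    ∀ i, 0 ≤ w i := by
  by_contra h
  push_neg at h
  obtain ⟨i₀, hi₀⟩ := h
  obtain ⟨m, -, hm⟩ := Finset.exists_min_image Finset.univ w ⟨i₀, Finset.mem_univ i₀⟩
  have hmneg : w m < 0 := lt_of_le_of_lt (hm i₀ (Finset.mem_univ i₀)) hi₀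
  have hmv : ((1 : Matrix n n ℝ) - K).mulVec w m = w m - ∑ j, K m j * w j := by
    rw [Matrix.sub_mulVec, Matrix.one_mulVec]
    simp [Matrix.mulVec, dotProduct]
  have h1 : (∑ j, K m j) * w m ≤ ∑ j, K m j * w j := by
    rw [Finset.sum_mul]
    exact Finset.sum_le_sum fun j _ =>
      mul_le_mul_of_nonneg_left (hm j (Finset.mem_univ j)) (hK m j)
  have h2 : w m < (∑ j, K m j) * w m := by
    nlinarith [hr m]
  have := hw m
  rw [hmv] at this
  linarith

lemma helper_le {n : Type*} [Fintype n] [DecidableEq n]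
    (K : Matrix n n ℝ) (hK : ∀ i j, 0 ≤ K i j)
    (hr : ∀ i, ∑ j, K i j < 1)
    (z b : n → ℝ) (h : ∀ i, ((1 : Matrix n n ℝ) - K).mulVec z i ≤ b i) :
    ∀ i, z i ≤ ((1 : Matrix n n ℝ) - K)⁻¹.mulVec b i := by
  set M : Matrix n n ℝ := 1 - K with hM
  have hu : IsUnit M := by
    rw [← Matrix.mulVec_injective_iff_isUnit]
    intro a c hac
    have h0 : M.mulVec (a - c) = 0 := by
      rw [Matrix.mulVec_sub, hac, sub_self]
    have h1 := helper_nonneg K hK hr (a - c) (fun i => by rw [← hM, h0]; simp)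
    have h2 := helper_nonneg K hK hr (c - a) (fun i => by
      have : M.mulVec (c - a) = 0 := by rw [Matrix.mulVec_sub, hac, sub_self]
      rw [← hM, this]; simp)
    funext i
    have := h1 i; have := h2 i
    simp only [Pi.sub_apply, sub_nonneg] at *
    linarith
  have hMx : M.mulVec (M⁻¹.mulVec b) = b := by
    rw [Matrix.mulVec_mulVec, Matrix.mul_nonsing_inv _ ((Matrix.isUnit_iff_isUnit_det _).mp hu),
      Matrix.one_mulVec]
  have h3 := helper_nonneg K hK hr (M⁻¹.mulVec b - z) (fun i => by
    rw [← hM, Matrix.mulVec_sub, hMx]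
    have := h i
    simp only [Pi.sub_apply, sub_nonneg]
    exact this)
  intro i
  have := h3 i
  simp only [Pi.sub_apply, sub_nonneg] at this
  exact this

/-- In the adversarial FJ model with broadcasters fixed at 1, the
aggregate attacked outcome g_{A,{T_j}} (closed form of Eq. 4 computed with the
reweighted matrix of Eq. 3, p ≥ 0) is at least g_∅ = 1ᵀz∅, where z∅ ∈ [0,1]^N is the
fixed point of the unattacked FJ system in which agents in A use s_j = 1 and θ_j = 1:
making adversarial agents fully stubborn at opinion 1 and adding nonnegative influence
increments cannot decrease the aggregate opinion toward the adversarial stance. -/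
theorem stmt17 (N : ℕ) (W : Matrix (Fin N) (Fin N) ℝ) (θ s : Fin N → ℝ)
    (A : Finset (Fin N)) (B : Fin N → Finset (Fin N)) (p : ℝ)
    (zempty : Fin N → ℝ)
    (hW0 : ∀ i j, 0 ≤ W i j) (hW1 : ∀ i, ∑ j, W i j = 1)
    (hθ : ∀ i ∉ A, θ i ∈ Set.Ioc (0 : ℝ) 1)
    (hs : ∀ i, s i ∈ Set.Icc (0 : ℝ) 1)
    (hB : ∀ i, B i ⊆ A)
    (hp : 0 ≤ p) (hAp : ∀ i, ((B i).card : ℝ) * p ≤ 1)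
    (hzfix : zempty =
      (Matrix.diagonal fun i => if i ∈ A then (1 : ℝ) else θ i).mulVec
        (fun i => if i ∈ A then (1 : ℝ) else s i) +
      ((1 - Matrix.diagonal fun i => if i ∈ A then (1 : ℝ) else θ i) * W).mulVec zempty)
    (hz01 : ∀ i, zempty i ∈ Set.Icc (0 : ℝ) 1) :
    let Wmod : Matrix (Fin N) (Fin N) ℝ :=
      Matrix.of fun i j =>
        (1 - ((B i).card : ℝ) * p) * W i j + (if j ∈ B i then p else 0)
    let ΘU : Matrix {i : Fin N // i ∉ A} {i : Fin N // i ∉ A} ℝ :=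
      Matrix.diagonal fun i => θ i.1
    let WUU : Matrix {i : Fin N // i ∉ A} {i : Fin N // i ∉ A} ℝ :=
      Matrix.of fun i j => Wmod i.1 j.1
    let WUA : Matrix {i : Fin N // i ∉ A} {i : Fin N // i ∈ A} ℝ :=
      Matrix.of fun i j => Wmod i.1 j.1
    let gA : ℝ :=
      (∑ i, (1 - (1 - ΘU) * WUU)⁻¹.mulVec
        (ΘU.mulVec (fun i => s i.1) + ((1 - ΘU) * WUA).mulVec fun _ => 1) i) +
      (A.card : ℝ)
    ∑ i, zempty i ≤ gA := by
  intro Wmod ΘU WUU WUA gA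
  have hWm : ∀ i j, Wmod i j = (1 - ((B i).card : ℝ) * p) * W i j + (if j ∈ B i then p else 0) :=
    fun i j => rfl
  have hc1 : ∀ i, 0 ≤ 1 - ((B i).card : ℝ) * p := fun i => by linarith [hAp i]
  have hc0 : ∀ i, 0 ≤ ((B i).card : ℝ) * p := fun i => mul_nonneg (Nat.cast_nonneg _) hp
  -- Wmod basic facts
  have hWm0 : ∀ i j, 0 ≤ Wmod i j := by
    intro i j
    rw [hWm]
    have := mul_nonneg (hc1 i) (hW0 i j)
    split <;> linarith
  have hWmp : ∀ i j, j ∈ B i → p ≤ Wmod i j := by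
    intro i j hj
    rw [hWm]
    have := mul_nonneg (hc1 i) (hW0 i j)
    simp [hj]; linarith
  have hWmsum : ∀ i, ∑ j, Wmod i j = 1 := by
    intro i
    simp only [hWm]
    rw [Finset.sum_add_distrib, ← Finset.mul_sum, hW1 i, mul_one,
      Finset.sum_ite_mem, Finset.univ_inter, Finset.sum_const, nsmul_eq_mul]
    ring
  -- pointwise fixed point
  have hdiag : (1 : Matrix (Fin N) (Fin N) ℝ)
        - Matrix.diagonal (fun i => if i ∈ A then (1 : ℝ) else θ i)
      = Matrix.diagonal (fun i => 1 - if i ∈ A then (1 : ℝ) else θ i) := by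
    ext a b
    by_cases hab : a = b <;> simp [Matrix.diagonal_apply, Matrix.one_apply, hab]
  have hfix : ∀ i, zempty i = (if i ∈ A then (1:ℝ) else θ i) * (if i ∈ A then (1:ℝ) else s i)
      + (1 - (if i ∈ A then (1:ℝ) else θ i)) * ∑ j, W i j * zempty j := by
    intro i
    conv_lhs => rw [hzfix]
    rw [Pi.add_apply, Matrix.mulVec_diagonal, hdiag, ← Matrix.mulVec_mulVec,
      Matrix.mulVec_diagonal]
    simp [Matrix.mulVec, dotProduct]
  have hzA : ∀ i ∈ A, zempty i = 1 := by
    intro i hi; rw [hfix i]; simp [hi]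
  have hzU : ∀ i ∉ A, zempty i = θ i * s i + (1 - θ i) * ∑ j, W i j * zempty j := by
    intro i hi; rw [hfix i]; simp [hi]
  -- K facts
  set K : Matrix {i : Fin N // i ∉ A} {i : Fin N // i ∉ A} ℝ := (1 - ΘU) * WUU with hKdef
  have h1U : (1 : Matrix {i : Fin N // i ∉ A} {i : Fin N // i ∉ A} ℝ) - ΘU
      = Matrix.diagonal (fun i => 1 - θ i.1) := by
    ext a b
    by_cases hab : a = b <;> simp [ΘU, Matrix.diagonal_apply, Matrix.one_apply, hab]
  have hKapp : ∀ i j, K i j = (1 - θ i.1) * Wmod i.1 j.1 := by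
    intro i j
    rw [hKdef, h1U, Matrix.diagonal_mul]
    rfl
  have hK0 : ∀ i j, 0 ≤ K i j := by
    intro i j
    rw [hKapp]
    exact mul_nonneg (by linarith [(hθ i.1 i.2).2]) (hWm0 _ _)
  have hsubU : ∀ (f : Fin N → ℝ), ∑ j : {i : Fin N // i ∉ A}, f j.1 = ∑ j ∈ Aᶜ, f j := by
    intro f
    exact (Finset.sum_subtype Aᶜ (fun x => Finset.mem_compl) f).symm
  have hsubA : ∀ (f : Fin N → ℝ), ∑ j : {i : Fin N // i ∈ A}, f j.1 = ∑ j ∈ A, f j := by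
    intro f
    exact (Finset.sum_subtype A (fun x => Iff.rfl) f).symm
  have hKr : ∀ i, ∑ j, K i j < 1 := by
    intro i
    have h1 : ∑ j, K i j = (1 - θ i.1) * ∑ j ∈ Aᶜ, Wmod i.1 j := by
      simp only [hKapp]
      rw [← Finset.mul_sum, hsubU (fun j => Wmod i.1 j)]
    have h2 : ∑ j ∈ Aᶜ, Wmod i.1 j ≤ 1 := by
      rw [← hWmsum i.1]
      exact Finset.sum_le_sum_of_subset_of_nonneg (Finset.subset_univ _)
        (fun j _ _ => hWm0 i.1 j)
    have hθi := hθ i.1 i.2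
    rw [h1]
    nlinarith [hθi.1, hθi.2, (Finset.sum_nonneg fun j (_ : j ∈ Aᶜ) => hWm0 i.1 j)]
  -- the vector b
  set b : {i : Fin N // i ∉ A} → ℝ :=
    ΘU.mulVec (fun i => s i.1) + ((1 - ΘU) * WUA).mulVec (fun _ => 1) with hbdef
  have hbapp : ∀ i, b i = θ i.1 * s i.1 + (1 - θ i.1) * ∑ j ∈ A, Wmod i.1 j := by
    intro i
    rw [hbdef, Pi.add_apply, Matrix.mulVec_diagonal, h1U, ← Matrix.mulVec_mulVec,
      Matrix.mulVec_diagonal]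
    congr 1
    congr 1
    rw [← hsubA (fun j => Wmod i.1 j)]
    simp [Matrix.mulVec, dotProduct, WUA]
  -- the key inequality
  set zU : {i : Fin N // i ∉ A} → ℝ := fun i => zempty i.1 with hzUdef
  have hkey : ∀ i, ((1 : Matrix {i : Fin N // i ∉ A} {i : Fin N // i ∉ A} ℝ) - K).mulVec zU i
      ≤ b i := by
    intro i
    obtain ⟨i0, hi0⟩ := i
    have hmv : ((1 : Matrix {i : Fin N // i ∉ A} {i : Fin N // i ∉ A} ℝ) - K).mulVec zU ⟨i0, hi0⟩
        = zempty i0 - (1 - θ i0) * ∑ j ∈ Aᶜ, Wmod i0 j * zempty j := by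
      rw [Matrix.sub_mulVec, Matrix.one_mulVec, Pi.sub_apply]
      congr 1
      have : ∀ j : {i : Fin N // i ∉ A}, K ⟨i0, hi0⟩ j * zU j
          = (1 - θ i0) * (Wmod i0 j.1 * zempty j.1) := by
        intro j; rw [hKapp]; ring
      simp only [Matrix.mulVec, dotProduct]
      rw [Finset.sum_congr rfl (fun j _ => this j), ← Finset.mul_sum]
      congr 1
      exact hsubU (fun j => Wmod i0 j * zempty j)
    rw [hmv, hbapp]
    simp only
    -- reduce to scalar inequality
    have hzi := hzU i0 hi0
    have hθi := hθ i0 hi0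
    set S := ∑ j, W i0 j * zempty j with hS
    have hS1 : S ≤ 1 := by
      rw [← hW1 i0]
      exact Finset.sum_le_sum fun j _ => by
        nlinarith [hW0 i0 j, (hz01 j).1, (hz01 j).2]
    have hS0 : 0 ≤ S :=
      Finset.sum_nonneg fun j _ => mul_nonneg (hW0 i0 j) (hz01 j).1
    -- sum identities
    have hsplit : ∑ j ∈ Aᶜ, Wmod i0 j * zempty j + ∑ j ∈ A, Wmod i0 j * zempty j
        = ∑ j, Wmod i0 j * zempty j := by
      rw [add_comm]; exact Finset.sum_add_sum_compl A _
    have hexp : ∑ j, Wmod i0 j * zempty j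
        = (1 - ((B i0).card : ℝ) * p) * S + p * ∑ j ∈ B i0, zempty j := by
      simp only [hWm, add_mul]
      rw [Finset.sum_add_distrib]
      congr 1
      · rw [hS, Finset.mul_sum]
        exact Finset.sum_congr rfl fun j _ => by ring
      · rw [Finset.mul_sum]
        simp [ite_mul, Finset.sum_ite_mem]
    have hTA : ∑ j ∈ A, Wmod i0 j - ∑ j ∈ A, Wmod i0 j * zempty j
        ≥ ((B i0).card : ℝ) * p - p * ∑ j ∈ B i0, zempty j := by
      have h1 : ∑ j ∈ A, Wmod i0 j - ∑ j ∈ A, Wmod i0 j * zempty j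
          = ∑ j ∈ A, Wmod i0 j * (1 - zempty j) := by
        rw [← Finset.sum_sub_distrib]
        exact Finset.sum_congr rfl fun j _ => by ring
      have h2 : ∑ j ∈ B i0, Wmod i0 j * (1 - zempty j) ≤ ∑ j ∈ A, Wmod i0 j * (1 - zempty j) :=
        Finset.sum_le_sum_of_subset_of_nonneg (hB i0)
          (fun j _ _ => mul_nonneg (hWm0 i0 j) (by linarith [(hz01 j).2]))
      have h3 : ∑ j ∈ B i0, p * (1 - zempty j) ≤ ∑ j ∈ B i0, Wmod i0 j * (1 - zempty j) :=
        Finset.sum_le_sum fun j hj =>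
          mul_le_mul_of_nonneg_right (hWmp i0 j hj) (by linarith [(hz01 j).2])
      have h4 : ∑ j ∈ B i0, p * (1 - zempty j)
          = ((B i0).card : ℝ) * p - p * ∑ j ∈ B i0, zempty j := by
        rw [show (∑ j ∈ B i0, p * (1 - zempty j)) = ∑ j ∈ B i0, (p - p * zempty j) from
            Finset.sum_congr rfl fun j _ => by ring,
          Finset.sum_sub_distrib, Finset.sum_const, nsmul_eq_mul, Finset.mul_sum]
      rw [h1]
      linarith
    -- combine
    have hgoal : S ≤ ∑ j ∈ Aᶜ, Wmod i0 j * zempty j + ∑ j ∈ A, Wmod i0 j := by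
      nlinarith [hc0 i0, hc1 i0]
    have h1t : (0:ℝ) ≤ 1 - θ i0 := by linarith [hθi.2]
    rw [hzi]
    nlinarith [mul_le_mul_of_nonneg_left hgoal h1t]
  -- conclude
  have hmain := helper_le K hK0 hKr zU b hkey
  have hsumA : ∑ i ∈ A, zempty i = (A.card : ℝ) := by
    rw [Finset.sum_congr rfl hzA, Finset.sum_const, nsmul_eq_mul, mul_one]
  have hsplitall : ∑ i, zempty i = (A.card : ℝ) + ∑ i : {i : Fin N // i ∉ A}, zU i := by
    rw [← Finset.sum_add_sum_compl A zempty, hsumA, hsubU zempty]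
  rw [hsplitall]
  have : ∑ i : {i : Fin N // i ∉ A}, zU i
      ≤ ∑ i, ((1 : Matrix {i : Fin N // i ∉ A} {i : Fin N // i ∉ A} ℝ) - K)⁻¹.mulVec b i :=
    Finset.sum_le_sum fun i _ => hmain i
  have hgAeq : gA = (∑ i, ((1 : Matrix {i : Fin N // i ∉ A} {i : Fin N // i ∉ A} ℝ) - K)⁻¹.mulVec b i)
      + (A.card : ℝ) := rfl
  rw [hgAeq]
  linarith
end

section
/- Consider two adversarial configurations over the same A that differ only in that the second configuration's per-target influencer sets satisfy A_i ⊆ A'_i for every i ∈ U, with p ≥ 0 small enough that (1 − |A'_i|p) ≥ 0. If every original incoming weight from normal neighbors carries opinion at most 1 and the normal agents' equilibrium opinions are at most 1, then g_{A,{A_i}} ≤ g_{A,{A'_i}}: enlarging the influencer sets (weakly) increases the aggregate adversarial outcome. -/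
/-!
The normal agents' equilibrium `z` is the fixed point of `z ↦ Θ s + (I - Θ) W' x`, where `x`
extends `z` by the adversaries' opinion `1`. As `x ≤ 1` and `x = 1` on every adversary, moving
weight `p` from `W` onto each adversary of a larger set `A'_i` can only raise `(W' x)_i`, so the
old equilibrium is a sub-solution of the new fixed-point equation. A minimum principle for
`I - K`, with `K ≥ 0` of row sums `< 1`, turns a sub-solution into a lower bound for the solution.
-/

open Finset

namespace Matrix

variable {n R : Type*} [Fintype n] [DecidableEq n]

theorem mulVec_inv_one_sub_eq [CommRing R] {K : Matrix n n R} (h : IsUnit (1 - K)) (b : n → R) :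
    (1 - K)⁻¹ *ᵥ b = K *ᵥ ((1 - K)⁻¹ *ᵥ b) + b := by
  have hdet : IsUnit (1 - K).det := (isUnit_iff_isUnit_det _).mp h
  have hsol : (1 - K) *ᵥ ((1 - K)⁻¹ *ᵥ b) = b := by
    rw [mulVec_mulVec, mul_nonsing_inv _ hdet, one_mulVec]
  rw [sub_mulVec, one_mulVec] at hsol
  exact sub_eq_iff_eq_add'.mp hsol

theorem one_sub_diagonal_mul_mulVec_apply [CommRing R] {m : Type*} [Fintype m] (d : n → R)
    (X : Matrix n m R) (v : m → R) (i : n) :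
    (((1 - diagonal d) * X) *ᵥ v) i = (1 - d i) * (X *ᵥ v) i := by
  rw [Matrix.sub_mul, Matrix.one_mul, sub_mulVec, ← mulVec_mulVec, Pi.sub_apply,
    mulVec_diagonal]
  ring

variable [Field R] [LinearOrder R] [IsStrictOrderedRing R] {K : Matrix n n R}

theorem nonneg_of_nonneg_one_sub_mulVec (hK : ∀ i j, 0 ≤ K i j) (hrow : ∀ i, ∑ j, K i j < 1)
    {v : n → R} (hv : 0 ≤ (1 - K) *ᵥ v) : 0 ≤ v := by
  by_contra hneg
  obtain ⟨j, hj⟩ : ∃ j, v j < 0 := by simpa [Pi.le_def] using hneg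
  have : Nonempty n := ⟨j⟩
  obtain ⟨i, hi⟩ := Finite.exists_min v
  have hvi : v i < 0 := (hi j).trans_lt hj
  have hKv : (∑ j, K i j) * v i ≤ (K *ᵥ v) i := by
    rw [sum_mul]
    exact sum_le_sum fun j _ => mul_le_mul_of_nonneg_left (hi j) (hK i j)
  have hvi' : 0 ≤ v i - (K *ᵥ v) i := by simpa [sub_mulVec] using hv i
  nlinarith [mul_neg_of_pos_of_neg (sub_pos.mpr (hrow i)) hvi]

theorem isUnit_one_sub_of_sum_row_lt_one (hK : ∀ i j, 0 ≤ K i j)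
    (hrow : ∀ i, ∑ j, K i j < 1) : IsUnit (1 - K) := by
  refine mulVec_injective_iff_isUnit.mp fun v w hvw => le_antisymm ?_ ?_ <;>
    refine sub_nonneg.mp (nonneg_of_nonneg_one_sub_mulVec hK hrow ?_) <;>
    simp [mulVec_sub, hvw]

theorem le_mulVec_inv_one_sub (hK : ∀ i j, 0 ≤ K i j) (hrow : ∀ i, ∑ j, K i j < 1)
    {z b : n → R} (hz : z ≤ K *ᵥ z + b) : z ≤ (1 - K)⁻¹ *ᵥ b := by
  have hdet : IsUnit (1 - K).det :=
    (isUnit_iff_isUnit_det _).mp (isUnit_one_sub_of_sum_row_lt_one hK hrow)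
  refine sub_nonneg.mp (nonneg_of_nonneg_one_sub_mulVec hK hrow ?_)
  rw [mulVec_sub, mulVec_mulVec, mul_nonsing_inv _ hdet, one_mulVec, sub_mulVec, one_mulVec]
  intro i
  simpa [add_comm] using hz i

theorem mulVec_apply_le_one_of_mem_rowStochastic {W : Matrix n n R}
    (hW : W ∈ rowStochastic R n) {x : n → R} (hx : x ≤ 1) (i : n) : (W *ᵥ x) i ≤ 1 := by
  calc (W *ᵥ x) i = ∑ j, W i j * x j := rfl
    _ ≤ ∑ j, W i j := sum_le_sum fun j _ =>
      mul_le_of_le_one_right (nonneg_of_mem_rowStochastic hW) (hx j)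
    _ = 1 := sum_row_of_mem_rowStochastic hW i

end Matrix

open Matrix

section Reweight

variable {n : Type*} [Fintype n] [DecidableEq n] {W : Matrix n n ℝ} {p : ℝ}

def reweight (W : Matrix n n ℝ) (p : ℝ) (C : n → Finset n) : Matrix n n ℝ :=
  of fun i j => (1 - ((C i).card : ℝ) * p) * W i j + (if j ∈ C i then p else 0)

theorem reweight_mem_rowStochastic (hW : W ∈ rowStochastic ℝ n) (hp : 0 ≤ p)
    {C : n → Finset n} (hC : ∀ i, 0 ≤ 1 - ((C i).card : ℝ) * p) :
    reweight W p C ∈ rowStochastic ℝ n := by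
  refine mem_rowStochastic_iff_sum.mpr ⟨fun i j => ?_, fun i => ?_⟩
  · exact add_nonneg (mul_nonneg (hC i) (nonneg_of_mem_rowStochastic hW)) (by positivity)
  · simp [reweight, sum_add_distrib, ← mul_sum, sum_row_of_mem_rowStochastic hW]

theorem reweight_mulVec_apply {C : n → Finset n} {x : n → ℝ} {i : n}
    (hx : ∀ j ∈ C i, x j = 1) :
    (reweight W p C *ᵥ x) i = (W *ᵥ x) i + (C i).card * p * (1 - (W *ᵥ x) i) := by
  have hC : ∑ j ∈ C i, p * x j = (C i).card * p := by
    rw [sum_congr rfl fun j hj => by rw [hx j hj, mul_one], sum_const, nsmul_eq_mul]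
  simp only [reweight, mulVec, dotProduct, of_apply, add_mul, ite_mul, zero_mul, sum_add_distrib,
    sum_ite_mem, univ_inter, hC, mul_assoc, ← mul_sum]
  ring

theorem reweight_mulVec_apply_le (hW : W ∈ rowStochastic ℝ n) (hp : 0 ≤ p)
    {C C' : n → Finset n} {x : n → ℝ} {i : n} (hx : x ≤ 1) (hCC' : C i ⊆ C' i)
    (hx' : ∀ j ∈ C' i, x j = 1) :
    (reweight W p C *ᵥ x) i ≤ (reweight W p C' *ᵥ x) i := by
  rw [reweight_mulVec_apply fun j hj => hx' j (hCC' hj), reweight_mulVec_apply hx']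
  have := mulVec_apply_le_one_of_mem_rowStochastic hW hx i
  gcongr

end Reweight

noncomputable section FriedkinJohnsen

variable {ι : Type*} [DecidableEq ι] (A : Finset ι)

/- Agents in `A` are adversaries broadcasting opinion `1`; the others are normal agents with
stubbornness `θ` and intrinsic opinions `s`. `fjEquilibrium` is the closed form `(I - K)⁻¹ b` of
their equilibrium, where `K = fjGain` and `b = fjInput` are the blocks of the update
`z ↦ Θ s + (I - Θ) M x` restricted to the normal agents. -/

def extendByOne (z : {i // i ∉ A} → ℝ) : ι → ℝ :=
  fun j => if h : j ∈ A then 1 else z ⟨j, h⟩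

variable {A} in
theorem extendByOne_le_one {z : {i // i ∉ A} → ℝ} (hz : z ≤ 1) : extendByOne A z ≤ 1 := by
  intro j
  unfold extendByOne
  split_ifs
  exacts [le_rfl, hz _]

variable [Fintype ι]

def fjGain (M : Matrix ι ι ℝ) (θ : ι → ℝ) : Matrix {i // i ∉ A} {i // i ∉ A} ℝ :=
  (1 - diagonal fun i : {i // i ∉ A} => θ i.1) * M.submatrix Subtype.val Subtype.val

def fjInput (M : Matrix ι ι ℝ) (θ s : ι → ℝ) : {i // i ∉ A} → ℝ :=
  ((diagonal fun i : {i // i ∉ A} => θ i.1) *ᵥ fun i => s i.1) +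
    ((1 - diagonal fun i : {i // i ∉ A} => θ i.1) *
      M.submatrix (Subtype.val : {i // i ∉ A} → ι) (Subtype.val : {i // i ∈ A} → ι) :
        Matrix {i // i ∉ A} {i // i ∈ A} ℝ) *ᵥ fun _ => 1

def fjEquilibrium (M : Matrix ι ι ℝ) (θ s : ι → ℝ) : {i // i ∉ A} → ℝ :=
  (1 - fjGain A M θ)⁻¹ *ᵥ fjInput A M θ s

variable {A}

theorem fjGain_apply (M : Matrix ι ι ℝ) (θ : ι → ℝ) (i j : {i // i ∉ A}) :
    fjGain A M θ i j = (1 - θ i) * M i j := by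
  simp only [fjGain, sub_mul, one_mul, Matrix.sub_apply, diagonal_mul, submatrix_apply]

theorem fjGain_mulVec_add_fjInput_apply (M : Matrix ι ι ℝ) (θ s : ι → ℝ)
    (z : {i // i ∉ A} → ℝ) (i : {i // i ∉ A}) :
    (fjGain A M θ *ᵥ z + fjInput A M θ s) i =
      θ i * s i + (1 - θ i) * (M *ᵥ extendByOne A z) i := by
  have hsplit : (M *ᵥ extendByOne A z) i =
      ∑ j : {j // j ∈ A}, M i j + ∑ j : {j // j ∉ A}, M i j * z j := by
    rw [mulVec, dotProduct, ← Fintype.sum_subtype_add_sum_subtype (· ∈ A)]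
    congr 1 <;> refine sum_congr (congrArg _ (Subsingleton.elim _ _)) fun j _ => ?_
    · rw [extendByOne, dif_pos j.2, mul_one]
    · rw [extendByOne, dif_neg j.2]
  rw [Pi.add_apply, fjGain, fjInput, Pi.add_apply, one_sub_diagonal_mul_mulVec_apply,
    one_sub_diagonal_mul_mulVec_apply, mulVec_diagonal, hsplit]
  simp only [mulVec, dotProduct, submatrix_apply, mul_one]
  ring

variable {M M' : Matrix ι ι ℝ} {θ : ι → ℝ}

theorem fjGain_nonneg (hM : M ∈ rowStochastic ℝ ι) (hθ : ∀ i ∉ A, θ i ∈ Set.Ioc (0 : ℝ) 1)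
    (i j : {i // i ∉ A}) : 0 ≤ fjGain A M θ i j := by
  rw [fjGain_apply]
  exact mul_nonneg (sub_nonneg.mpr (hθ i i.2).2) (nonneg_of_mem_rowStochastic hM)

theorem sum_fjGain_lt_one (hM : M ∈ rowStochastic ℝ ι) (hθ : ∀ i ∉ A, θ i ∈ Set.Ioc (0 : ℝ) 1)
    (i : {i // i ∉ A}) : ∑ j, fjGain A M θ i j < 1 := by
  have hU : ∑ j : {j // j ∉ A}, M i j ≤ 1 := by
    rw [← sum_row_of_mem_rowStochastic hM i, ← Fintype.sum_subtype_add_sum_subtype (· ∈ A)]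
    exact le_add_of_nonneg_left (sum_nonneg fun j _ => nonneg_of_mem_rowStochastic hM)
  obtain ⟨hθ0, hθ1⟩ := hθ i i.2
  calc ∑ j, fjGain A M θ i j = (1 - θ i) * ∑ j : {j // j ∉ A}, M i j := by
        simp only [fjGain_apply, mul_sum]
    _ ≤ 1 - θ i := mul_le_of_le_one_right (sub_nonneg.mpr hθ1) hU
    _ < 1 := sub_lt_self 1 hθ0

theorem fjEquilibrium_le (hM : M ∈ rowStochastic ℝ ι) (hM' : M' ∈ rowStochastic ℝ ι)
    (hθ : ∀ i ∉ A, θ i ∈ Set.Ioc (0 : ℝ) 1) (s : ι → ℝ)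
    (hle : ∀ i : {i // i ∉ A}, (M *ᵥ extendByOne A (fjEquilibrium A M θ s)) i ≤
      (M' *ᵥ extendByOne A (fjEquilibrium A M θ s)) i) :
    fjEquilibrium A M θ s ≤ fjEquilibrium A M' θ s := by
  set z := fjEquilibrium A M θ s
  have hfix : z = fjGain A M θ *ᵥ z + fjInput A M θ s :=
    mulVec_inv_one_sub_eq
      (isUnit_one_sub_of_sum_row_lt_one (fjGain_nonneg hM hθ) (sum_fjGain_lt_one hM hθ)) _
  refine le_mulVec_inv_one_sub (fjGain_nonneg hM' hθ) (sum_fjGain_lt_one hM' hθ) fun i => ?_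
  have hθi : 0 ≤ 1 - θ i := sub_nonneg.mpr (hθ i i.2).2
  calc z i = (fjGain A M θ *ᵥ z + fjInput A M θ s) i := congrFun hfix i
    _ = θ i * s i + (1 - θ i) * (M *ᵥ extendByOne A z) i :=
      fjGain_mulVec_add_fjInput_apply M θ s z i
    _ ≤ θ i * s i + (1 - θ i) * (M' *ᵥ extendByOne A z) i := by gcongr; exact hle i
    _ = (fjGain A M' θ *ᵥ z + fjInput A M' θ s) i :=
      (fjGain_mulVec_add_fjInput_apply M' θ s z i).symm

end FriedkinJohnsen

theorem stmt19_general (N : ℕ) (W : Matrix (Fin N) (Fin N) ℝ) (θ s : Fin N → ℝ)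
    (A : Finset (Fin N)) (B B' : Fin N → Finset (Fin N)) (p : ℝ)
    (hW0 : ∀ i j, 0 ≤ W i j) (hW1 : ∀ i, ∑ j, W i j = 1)
    (hθ : ∀ i ∉ A, θ i ∈ Set.Ioc (0 : ℝ) 1)
    (hBB' : ∀ i, B i ⊆ B' i) (hB' : ∀ i, B' i ⊆ A)
    (hp : 0 ≤ p) (hp' : ∀ i, 0 ≤ 1 - ((B' i).card : ℝ) * p) :
    let Wmod : (Fin N → Finset (Fin N)) → Matrix (Fin N) (Fin N) ℝ := fun C =>
      Matrix.of fun i j =>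
        (1 - ((C i).card : ℝ) * p) * W i j + (if j ∈ C i then p else 0)
    let ΘU : Matrix {i : Fin N // i ∉ A} {i : Fin N // i ∉ A} ℝ :=
      Matrix.diagonal fun i => θ i.1
    let zU : (Fin N → Finset (Fin N)) → ({i : Fin N // i ∉ A} → ℝ) := fun C =>
      (1 - (1 - ΘU) * (Matrix.of fun i j : {i : Fin N // i ∉ A} => Wmod C i.1 j.1))⁻¹.mulVec
        (ΘU.mulVec (fun i => s i.1) +
          ((1 - ΘU) *
            (Matrix.of fun (i : {i : Fin N // i ∉ A}) (j : {i : Fin N // i ∈ A}) =>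
              Wmod C i.1 j.1)).mulVec fun _ => 1)
    (∀ i, zU B i ≤ 1) →
    (∑ i, zU B i) + (A.card : ℝ) ≤ (∑ i, zU B' i) + (A.card : ℝ) := by
  intro Wmod ΘU zU hz
  have hW : W ∈ rowStochastic ℝ (Fin N) := mem_rowStochastic_iff_sum.mpr ⟨hW0, hW1⟩
  have hpB : ∀ i, 0 ≤ 1 - ((B i).card : ℝ) * p := fun i =>
    (hp' i).trans (by gcongr; exact hBB' i)
  have hle : fjEquilibrium A (reweight W p B) θ s ≤ fjEquilibrium A (reweight W p B') θ s :=
    fjEquilibrium_le (reweight_mem_rowStochastic hW hp hpB)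
      (reweight_mem_rowStochastic hW hp hp') hθ s fun i =>
        reweight_mulVec_apply_le hW hp (extendByOne_le_one hz) (hBB' i) fun j hj =>
          dif_pos (hB' i hj)
  gcongr with i
  exact hle i

/-- Consider two adversarial configurations over the same adversarial set
A whose per-target influencer sets satisfy A_i ⊆ A'_i for every normal agent i, with
p ≥ 0 small enough that 1 − |A'_i|p ≥ 0. If the intrinsic opinions of normal agents lie
in [0,1] and the normal agents' equilibrium opinions (for the smaller configuration) are
at most 1, then g_{A,{A_i}} ≤ g_{A,{A'_i}}: enlarging the influencer sets weakly
increases the aggregate adversarial outcome. -/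
theorem stmt19 (N : ℕ) (W : Matrix (Fin N) (Fin N) ℝ) (θ s : Fin N → ℝ)
    (A : Finset (Fin N)) (B B' : Fin N → Finset (Fin N)) (p : ℝ)
    (hW0 : ∀ i j, 0 ≤ W i j) (hW1 : ∀ i, ∑ j, W i j = 1)
    (hθ : ∀ i ∉ A, θ i ∈ Set.Ioc (0 : ℝ) 1)
    (hs : ∀ i ∉ A, s i ∈ Set.Icc (0 : ℝ) 1)
    (hBB' : ∀ i, B i ⊆ B' i) (hB' : ∀ i, B' i ⊆ A)
    (hp : 0 ≤ p) (hp' : ∀ i, 0 ≤ 1 - ((B' i).card : ℝ) * p) :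
    let Wmod : (Fin N → Finset (Fin N)) → Matrix (Fin N) (Fin N) ℝ := fun C =>
      Matrix.of fun i j =>
        (1 - ((C i).card : ℝ) * p) * W i j + (if j ∈ C i then p else 0)
    let ΘU : Matrix {i : Fin N // i ∉ A} {i : Fin N // i ∉ A} ℝ :=
      Matrix.diagonal fun i => θ i.1
    let zU : (Fin N → Finset (Fin N)) → ({i : Fin N // i ∉ A} → ℝ) := fun C =>
      (1 - (1 - ΘU) * (Matrix.of fun i j : {i : Fin N // i ∉ A} => Wmod C i.1 j.1))⁻¹.mulVec
        (ΘU.mulVec (fun i => s i.1) +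
          ((1 - ΘU) *
            (Matrix.of fun (i : {i : Fin N // i ∉ A}) (j : {i : Fin N // i ∈ A}) =>
              Wmod C i.1 j.1)).mulVec fun _ => 1)
    (∀ i, zU B i ≤ 1) →
    (∑ i, zU B i) + (A.card : ℝ) ≤ (∑ i, zU B' i) + (A.card : ℝ) :=
  stmt19_general N W θ s A B B' p hW0 hW1 hθ hBB' hB' hp hp'
end
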